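/- arXiv:2401.12782 — 2 statements merged into one kernel-verified Lean document; each statement's English description precedes it below -/
import Mathlib

section
/- Let a, b, c be integers with a ≡ ±1 (mod 3), b ≡ 9 or 18 (mod 27), c ≡ 0 (mod 81), and b/3^{v_3(b)} ≡ −a (mod 3), and suppose F(x) = x^4 + a·x^3 + b·x + c is irreducible over ℚ with 3·v_3(b) < 2·v_3(c). Then 3 is a common index divisor of K = ℚ(α) (α a root of F), and K is not monogenic. -/
/-!
Write `b = 9b'` and `c = 81c'`; then `b' ≡ -a ≢ 0 (mod 3)`. The quartic `F` has four simple
roots in `ℤ₃`: three of the form `3y`, one for each residue of `y` (Hensel's lemma applies since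
`F(3y)/27 ≡ a(y³ - y) (mod 3)` has derivative `≡ b' ≢ 0`), and one root `r ≡ -a`. Each root
gives a ring map `𝓞 K → ℤ₃ → 𝔽₃`, and the four maps are distinct: they are told apart by `α`
and by the algebraic integer `γ = (α² + aα)/3`, at which they take the values
`(0, 0), (0, a), (0, -a), (-a, 0)`. On the other hand, if `3 ∤ [𝓞 K : ℤ[θ]]`, a ring map
`𝓞 K → 𝔽₃` is determined by its value at `θ`, so there are at most three of them.
-/

open Polynomial NumberField

noncomputable def zIndex {K : Type} [Field K] [NumberField K] (θ : 𝓞 K) : ℕ :=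
  ((Algebra.adjoin ℤ {θ}).toSubring.toAddSubgroup).index

namespace PadicInt

variable {p : ℕ} [Fact p.Prime]

lemma toZMod_eq_zero_iff_norm_lt_one {z : ℤ_[p]} : toZMod z = 0 ↔ ‖z‖ < 1 := by
  rw [← RingHom.mem_ker, ker_toZMod, IsLocalRing.mem_maximalIdeal, mem_nonunits]

theorem exists_aeval_eq_zero_toZMod_eq (P : ℤ[X]) {t : ZMod p} (ht : aeval t P = 0)
    (ht' : aeval t (derivative P) ≠ 0) : ∃ z : ℤ_[p], aeval z P = 0 ∧ toZMod z = t := by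
  set z₀ : ℤ_[p] := (t.val : ℤ_[p])
  have hz₀ : toZMod z₀ = t := by simp [z₀]
  have hres (Q : ℤ[X]) : toZMod (aeval z₀ Q) = aeval t Q := by
    rw [← hz₀]; exact (aeval_algHom_apply (toZMod : ℤ_[p] →+* ZMod p).toIntAlgHom z₀ Q).symm
  have hderiv : ‖aeval z₀ (derivative P)‖ = 1 := by
    refine le_antisymm (norm_le_one _) (not_lt.mp fun h => ht' ?_)
    rw [← hres, toZMod_eq_zero_iff_norm_lt_one.mpr h]
  have hnorm : ‖aeval z₀ (P.map (algebraMap ℤ ℤ_[p]))‖ <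
      ‖aeval z₀ (derivative (P.map (algebraMap ℤ ℤ_[p])))‖ ^ 2 := by
    rw [derivative_map, aeval_map_algebraMap, aeval_map_algebraMap, hderiv, one_pow,
      ← toZMod_eq_zero_iff_norm_lt_one, hres, ht]
  obtain ⟨z, hz, hzz₀, -⟩ := hensels_lemma hnorm
  refine ⟨z, by rwa [aeval_map_algebraMap] at hz, ?_⟩
  rw [derivative_map, aeval_map_algebraMap, hderiv, ← toZMod_eq_zero_iff_norm_lt_one,
    map_sub, sub_eq_zero] at hzz₀
  rw [hzz₀, hz₀]

end PadicInt

lemma Padic.norm_le_one_of_isIntegral {p : ℕ} [Fact p.Prime] {x : ℚ_[p]} (hx : IsIntegral ℤ x) :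
    ‖x‖ ≤ 1 := by
  obtain ⟨y, rfl⟩ := IsIntegrallyClosed.isIntegral_iff.mp (hx.tower_top (A := ℤ_[p]))
  exact y.2

namespace NumberField.RingOfIntegers

variable {K : Type} [Field K] [NumberField K] {p : ℕ} [Fact p.Prime]

noncomputable def toPadicInt (σ : K →ₐ[ℚ] ℚ_[p]) : 𝓞 K →+* ℤ_[p] where
  toFun x := ⟨σ x, Padic.norm_le_one_of_isIntegral (x.isIntegral_coe.map σ.toRingHom.toIntAlgHom)⟩
  map_one' := Subtype.ext (map_one σ)
  map_mul' x y := Subtype.ext (map_mul σ (x : K) y)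
  map_zero' := Subtype.ext (map_zero σ)
  map_add' x y := Subtype.ext (map_add σ (x : K) y)

lemma exists_ringHom_padicInt_apply_eq {F : ℤ[X]} (hF : F.Monic)
    (hirr : Irreducible (F.map (Int.castRingHom ℚ))) {α : 𝓞 K}
    (hgen : Algebra.adjoin ℚ {(α : K)} = ⊤) (hα : aeval (α : K) F = 0) {x : ℤ_[p]}
    (hx : aeval x F = 0) : ∃ φ : 𝓞 K →+* ℤ_[p], φ α = x := by
  have hαF : aeval (α : K) (F.map (algebraMap ℤ ℚ)) = 0 := by rwa [aeval_map_algebraMap]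
  have hmin : minpoly ℚ (α : K) = F.map (algebraMap ℤ ℚ) :=
    (minpoly.eq_of_irreducible_of_monic hirr hαF (hF.map _)).symm
  have hxmin : aeval (x : ℚ_[p]) (minpoly ℚ (α : K)) = 0 := by
    rw [hmin, aeval_map_algebraMap, ← PadicInt.algebraMap_apply, aeval_algebraMap_apply, hx,
      map_zero]
  let pb := PowerBasis.ofAdjoinEqTop (α.isIntegral_coe.tower_top (A := ℚ)) hgen
  exact ⟨toPadicInt (pb.lift (x : ℚ_[p]) hxmin), Subtype.ext (pb.lift_gen _ hxmin)⟩

end NumberField.RingOfIntegers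

section zIndex

variable {K : Type} [Field K] [NumberField K] {p : ℕ} [Fact p.Prime]

lemma RingHom.eq_of_apply_eq_of_not_dvd_zIndex {θ : 𝓞 K} (hθ : ¬ p ∣ zIndex θ)
    {ψ ψ' : 𝓞 K →+* ZMod p} (h : ψ θ = ψ' θ) : ψ = ψ' := by
  ext x
  have hx := AlgHom.adjoin_le_equalizer ψ.toIntAlgHom ψ'.toIntAlgHom (Set.eqOn_singleton.2 h)
    ((Algebra.adjoin ℤ {θ}).toSubring.toAddSubgroup.nsmul_index_mem x)
  change ψ (zIndex θ • x) = ψ' (zIndex θ • x) at hx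
  rw [map_nsmul, map_nsmul, nsmul_eq_mul, nsmul_eq_mul] at hx
  exact mul_left_cancel₀ (by rwa [Ne, ZMod.natCast_eq_zero_iff]) hx

lemma dvd_zIndex_of_injective {ι : Type*} [Fintype ι] (hcard : p < Fintype.card ι)
    {ψ : ι → 𝓞 K →+* ZMod p} (hψ : Function.Injective ψ) (θ : 𝓞 K) : p ∣ zIndex θ := by
  by_contra hθ
  have hinj : Function.Injective fun i => ψ i θ := fun i j hij =>
    hψ (RingHom.eq_of_apply_eq_of_not_dvd_zIndex hθ hij)
  simpa using (Fintype.card_le_of_injective _ hinj).trans_lt' hcard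

lemma zIndex_eq_one_of_adjoin_eq_top {θ : 𝓞 K} (h : Algebra.adjoin ℤ {θ} = ⊤) :
    zIndex θ = 1 := by
  simp [zIndex, h]

end zIndex

noncomputable def quartic (a b c : ℤ) : ℤ[X] := X ^ 4 + C a * X ^ 3 + C b * X + C c

section Quartic

variable {a b c : ℤ}

@[simp]
lemma aeval_quartic {A : Type*} [CommRing A] (x : A) :
    aeval x (quartic a b c) = x ^ 4 + a * x ^ 3 + b * x + c := by
  simp [quartic]

lemma aeval_derivative_quartic {A : Type*} [CommRing A] (x : A) :
    aeval x (derivative (quartic a b c)) = 4 * x ^ 3 + 3 * a * x ^ 2 + b := by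
  simp only [quartic, eq_intCast, derivative_mul, derivative_X_pow, derivative_intCast,
    derivative_X, map_add, map_mul, map_pow, map_natCast, aeval_X, map_intCast, map_zero, map_one]
  ring

lemma quartic_monic : (quartic a b c).Monic := by
  unfold quartic; monicity!

lemma exists_quartic_root_three_mul (ha : (a : ZMod 3) ≠ 0) (hb : (b : ZMod 3) = -a) (t : ZMod 3) :
    ∃ y : ℤ_[3], aeval (3 * y) (quartic a (9 * b) (81 * c)) = 0 ∧ PadicInt.toZMod y = t := by
  have h3 : (3 : ZMod 3) = 0 := rfl
  set G : ℤ[X] := 3 * X ^ 4 + C a * X ^ 3 + C b * X + C (3 * c)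
  have hG {A : Type} [CommRing A] (x : A) : aeval x G = 3 * x ^ 4 + a * x ^ 3 + b * x + 3 * c := by
    simp [G, map_ofNat]
  have hG' {A : Type} [CommRing A] (x : A) :
      aeval x (derivative G) = 12 * x ^ 3 + 3 * a * x ^ 2 + b := by
    simp only [G, eq_intCast, derivative_mul, derivative_ofNat, derivative_X_pow,
      derivative_intCast, derivative_X, map_add, map_mul, map_pow, map_ofNat, map_natCast, aeval_X,
      map_intCast, map_zero, map_one]
    ring
  obtain ⟨y, hy, hyt⟩ := PadicInt.exists_aeval_eq_zero_toZMod_eq G (t := t)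
    (by rw [hG]; linear_combination (t ^ 4 + c) * h3 + a * ZMod.pow_card t + t * hb)
    (by
      rw [hG', show (12 * t ^ 3 + 3 * a * t ^ 2 + b : ZMod 3) = -a by
        linear_combination (4 * t ^ 3 + a * t ^ 2) * h3 + hb]
      exact neg_ne_zero.mpr ha)
  refine ⟨y, ?_, hyt⟩
  rw [hG] at hy
  rw [aeval_quartic]
  push_cast
  linear_combination 27 * hy

lemma exists_quartic_root_toZMod_eq_neg (ha : (a : ZMod 3) ≠ 0) :
    ∃ r : ℤ_[3], aeval r (quartic a (9 * b) (81 * c)) = 0 ∧ PadicInt.toZMod r = -a := by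
  have h3 : (3 : ZMod 3) = 0 := rfl
  refine PadicInt.exists_aeval_eq_zero_toZMod_eq _ ?_ ?_
  · rw [aeval_quartic]
    push_cast
    linear_combination (-3 * a * b + 27 * c) * h3
  · rw [aeval_derivative_quartic,
      show (4 * (-a) ^ 3 + 3 * a * (-a) ^ 2 + (9 * b : ℤ) : ZMod 3) = -a ^ 3 by
        push_cast; linear_combination (3 * b) * h3]
    exact neg_ne_zero.mpr (pow_ne_zero 3 ha)

lemma PadicInt.toZMod_eq_of_three_mul_eq {y g : ℤ_[3]} (h : 3 * g = (3 * y) ^ 2 + a * (3 * y)) :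
    PadicInt.toZMod g = a * PadicInt.toZMod y := by
  obtain rfl : g = 3 * y ^ 2 + a * y :=
    mul_left_cancel₀ (by norm_num : (3 : ℤ_[3]) ≠ 0) (by linear_combination h)
  simp [map_ofNat, show (3 : ZMod 3) = 0 from rfl]

lemma PadicInt.toZMod_eq_zero_of_three_mul_eq {r g : ℤ_[3]}
    (hr : aeval r (quartic a (9 * b) (81 * c)) = 0) (h : 3 * g = r ^ 2 + a * r)
    (hr3 : PadicInt.toZMod r ≠ 0) : PadicInt.toZMod g = 0 := by
  have hg : r ^ 2 * g = 3 * -(b * r + 9 * c) :=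
    mul_left_cancel₀ (by norm_num : (3 : ℤ_[3]) ≠ 0)
      (by rw [aeval_quartic] at hr; push_cast at hr; linear_combination r ^ 2 * h + hr)
  have hg3 := congrArg PadicInt.toZMod hg
  rw [map_mul, map_mul, map_pow, map_ofNat, show (3 : ZMod 3) = 0 from rfl, zero_mul] at hg3
  exact (mul_eq_zero.mp hg3).resolve_left (pow_ne_zero _ hr3)

lemma three_dvd_sq_add_mul {K : Type} [Field K] [NumberField K] {α : 𝓞 K}
    (hα : aeval (α : K) (quartic a (9 * b) (81 * c)) = 0) : (3 : 𝓞 K) ∣ α ^ 2 + a * α := by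
  have hαK : (α : K) ^ 4 + a * (α : K) ^ 3 + 9 * b * α + 81 * c = 0 := by
    simpa using hα
  have hint : IsIntegral ℤ (((α : K) ^ 2 + a * α) / 3) := by
    -- the polynomial `∏ᵢ (X - (αᵢ ^ 2 + a * αᵢ) / 3)`, the `αᵢ` running over the roots of `F`
    refine ⟨X ^ 4 + C (18 * c + a * b) * X ^ 2 + C (3 * a ^ 2 * c - 3 * b ^ 2) * X
      + C (81 * c ^ 2 - 9 * a * b * c), by monicity!, ?_⟩
    rw [← aeval_def]
    simp only [eq_intCast, map_add, map_sub, map_mul, map_pow, map_ofNat, map_intCast, aeval_X]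
    linear_combination ((a + α) ^ 4 - a * (a + α) ^ 3 - 9 * b * (a + α) + 81 * c) / 81 * hαK
  refine ⟨⟨_, hint⟩, RingOfIntegers.ext ?_⟩
  change ((α ^ 2 + a * α : 𝓞 K) : K) = 3 * (((α : K) ^ 2 + a * α) / 3)
  push_cast [map_intCast]
  field_simp

theorem exists_injective_ringHom_zmod_three {K : Type} [Field K] [NumberField K]
    (ha : (a : ZMod 3) ≠ 0) (hb : (b : ZMod 3) = -a)
    (hirr : Irreducible ((quartic a (9 * b) (81 * c)).map (Int.castRingHom ℚ))) {α : 𝓞 K}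
    (hgen : Algebra.adjoin ℚ {(α : K)} = ⊤)
    (hα : aeval (α : K) (quartic a (9 * b) (81 * c)) = 0) :
    ∃ ψ : Fin 4 → 𝓞 K →+* ZMod 3, Function.Injective ψ := by
  obtain ⟨γ, hγ⟩ := three_dvd_sq_add_mul hα
  have hφ (x : ℤ_[3]) (hx : aeval x (quartic a (9 * b) (81 * c)) = 0) :
      ∃ φ : 𝓞 K →+* ℤ_[3], φ α = x ∧ 3 * φ γ = x ^ 2 + a * x := by
    obtain ⟨φ, hφ⟩ :=
      RingOfIntegers.exists_ringHom_padicInt_apply_eq quartic_monic hirr hgen hα hx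
    exact ⟨φ, hφ, by simpa [hφ, map_ofNat] using (congrArg φ hγ).symm⟩
  obtain ⟨y₀, hy₀, hy₀'⟩ := exists_quartic_root_three_mul (c := c) ha hb 0
  obtain ⟨y₁, hy₁, hy₁'⟩ := exists_quartic_root_three_mul (c := c) ha hb 1
  obtain ⟨y₂, hy₂, hy₂'⟩ := exists_quartic_root_three_mul (c := c) ha hb (-1)
  obtain ⟨r, hr, hr'⟩ := exists_quartic_root_toZMod_eq_neg (b := b) (c := c) ha
  obtain ⟨φ₀, hφ₀α, hφ₀γ⟩ := hφ _ hy₀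
  obtain ⟨φ₁, hφ₁α, hφ₁γ⟩ := hφ _ hy₁
  obtain ⟨φ₂, hφ₂α, hφ₂γ⟩ := hφ _ hy₂
  obtain ⟨φ₃, hφ₃α, hφ₃γ⟩ := hφ _ hr
  refine ⟨fun i => PadicInt.toZMod.comp (![φ₀, φ₁, φ₂, φ₃] i),
    Function.Injective.of_comp (f := fun ψ : 𝓞 K →+* ZMod 3 => (ψ α, ψ γ)) ?_⟩
  have h3 : (3 : ZMod 3) = 0 := rfl
  have hvalues : (fun ψ : 𝓞 K →+* ZMod 3 => (ψ α, ψ γ)) ∘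
      (fun i => PadicInt.toZMod.comp (![φ₀, φ₁, φ₂, φ₃] i)) =
      ![(0, 0), (0, (a : ZMod 3)), (0, -(a : ZMod 3)), (-(a : ZMod 3), 0)] := by
    funext i
    fin_cases i
    · simp [hφ₀α, map_ofNat, h3, PadicInt.toZMod_eq_of_three_mul_eq hφ₀γ, hy₀']
    · simp [hφ₁α, map_ofNat, h3, PadicInt.toZMod_eq_of_three_mul_eq hφ₁γ, hy₁']
    · simp [hφ₂α, map_ofNat, h3, PadicInt.toZMod_eq_of_three_mul_eq hφ₂γ, hy₂']
    · simp [hφ₃α, hr', PadicInt.toZMod_eq_zero_of_three_mul_eq hr hφ₃γ (by simpa [hr'] using ha)]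
  rw [hvalues]
  revert ha
  generalize (a : ZMod 3) = A
  revert A
  decide

end Quartic

theorem stmt5_general (a b c : ℤ)
    (hb : b % 27 = 9 ∨ b % 27 = 18) (hc : c % 81 = 0)
    (hb3 : (b / 3 ^ padicValInt 3 b + a) % 3 = 0)
    (hirr : Irreducible ((X ^ 4 + C a * X ^ 3 + C b * X + C c : ℤ[X]).map (Int.castRingHom ℚ)))
    (K : Type) [Field K] [NumberField K] (α : K)
    (hroot : (Polynomial.aeval α) (X ^ 4 + C a * X ^ 3 + C b * X + C c : ℤ[X]) = 0)
    (hgen : Algebra.adjoin ℚ {α} = ⊤) :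
    (∀ θ : 𝓞 K, Algebra.adjoin ℚ {(θ : K)} = ⊤ → 3 ∣ zIndex θ) ∧
      ¬ ∃ θ : 𝓞 K, Algebra.adjoin ℤ {θ} = ⊤ := by
  obtain ⟨b, rfl⟩ : (9 : ℤ) ∣ b := by omega
  obtain ⟨c, rfl⟩ : (81 : ℤ) ∣ c := by omega
  have hb' : ¬ (3 : ℤ) ∣ b := by omega
  have hval : padicValInt 3 (9 * b) = 2 := by
    rw [show 9 * b = b * (3 : ℕ) * (3 : ℕ) by push_cast; ring, padicValInt_mul_eq_succ _ (by omega),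
      padicValInt_mul_eq_succ _ (by omega), padicValInt.eq_zero_of_not_dvd hb']
  rw [hval, show 9 * b / 3 ^ 2 = b by omega] at hb3
  have ha : (a : ZMod 3) ≠ 0 := by
    rw [Ne, ZMod.intCast_zmod_eq_zero_iff_dvd]; omega
  have hab : (b : ZMod 3) = -a := by
    rw [eq_neg_iff_add_eq_zero, ← Int.cast_add, ZMod.intCast_zmod_eq_zero_iff_dvd]; omega
  have hαint : IsIntegral ℤ α := ⟨_, quartic_monic, by rw [← aeval_def]; exact hroot⟩
  obtain ⟨ψ, hψ⟩ :=
    exists_injective_ringHom_zmod_three ha hab hirr (α := ⟨α, hαint⟩) hgen hroot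
  have hdvd (θ : 𝓞 K) : 3 ∣ zIndex θ := dvd_zIndex_of_injective (by simp) hψ θ
  refine ⟨fun θ _ => hdvd θ, fun ⟨θ, hθ⟩ => ?_⟩
  simpa [zIndex_eq_one_of_adjoin_eq_top hθ] using hdvd θ

theorem stmt5 (a b c : ℤ) (ha : a % 3 = 1 ∨ a % 3 = 2)
    (hb : b % 27 = 9 ∨ b % 27 = 18) (hc : c % 81 = 0)
    (hb3 : (b / 3 ^ padicValInt 3 b + a) % 3 = 0)
    (hval : 3 * padicValInt 3 b < 2 * padicValInt 3 c)
    (hirr : Irreducible ((X ^ 4 + C a * X ^ 3 + C b * X + C c : ℤ[X]).map (Int.castRingHom ℚ)))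
    (K : Type) [Field K] [NumberField K] (α : K)
    (hroot : (Polynomial.aeval α) (X ^ 4 + C a * X ^ 3 + C b * X + C c : ℤ[X]) = 0)
    (hgen : Algebra.adjoin ℚ {α} = ⊤) :
    (∀ θ : 𝓞 K, Algebra.adjoin ℚ {(θ : K)} = ⊤ → 3 ∣ zIndex θ) ∧
      ¬ ∃ θ : 𝓞 K, Algebra.adjoin ℤ {θ} = ⊤ :=
  stmt5_general a b c hb hc hb3 hirr K α hroot hgen
end

section
/- Let F(x) = x^4 + a·x^3 + b·x + c ∈ ℤ[x] and suppose there exists a prime p with min(4·v_p(a), (4/3)·v_p(b)) > v_p(c) > 2 (interpreting v_p(0) = +∞). Then F is irreducible over ℚ. -/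
/-!
By Gauss's lemma it is enough to exclude monic integer factors of degree 1 and 2. The hypotheses
say that the Newton polygon of `F` at `p` is the single segment from `(0, v_p(c))` to `(4, 0)`, so a
monic factor of degree `k` would have a constant term of valuation `k · v_p(c) / 4`, which is not an
integer since `gcd(v_p(c), 4) = 1`.
-/

open Polynomial

theorem Polynomial.Monic.eq_X_sq_add_C_mul_X_add_C {R : Type*} [Semiring R] {f : R[X]}
    (hf : f.Monic) (h : f.natDegree = 2) : f = X ^ 2 + C (f.coeff 1) * X + C (f.coeff 0) := by
  conv_lhs => rw [hf.as_sum, h]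
  simp [Finset.sum_range_succ, add_assoc, add_comm (C (f.coeff 0))]

theorem coeff_eq_of_X_pow_four_eq_mul_quadratics {R : Type*} [CommRing R] {a b c u v s t : R}
    (h : X ^ 4 + C a * X ^ 3 + C b * X + C c = (X ^ 2 + C u * X + C v) * (X ^ 2 + C s * X + C t)) :
    u + s = a ∧ v + t + u * s = 0 ∧ u * t + s * v = b ∧ v * t = c := by
  have hexp : (X ^ 2 + C u * X + C v) * (X ^ 2 + C s * X + C t) =
      X ^ 4 + C (u + s) * X ^ 3 + C (v + t + u * s) * X ^ 2 + C (u * t + s * v) * X + C (v * t) := by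
    simp only [map_add, map_mul]; ring
  have key := fun k => congrArg (coeff · k) (h.trans hexp)
  simp only [coeff_add, coeff_C_mul, coeff_X_pow, coeff_X, coeff_C] at key
  exact ⟨by simpa using (key 3).symm, by simpa using (key 2).symm, by simpa using (key 1).symm,
    by simpa using (key 0).symm⟩

theorem irreducible_map_of_monic_of_natDegree_eq_four {f : ℤ[X]} (hf : f.Monic)
    (hdeg : f.natDegree = 4) (hroot : ∀ r : ℤ, f.eval r ≠ 0)
    (hquad : ∀ u v s t : ℤ, f ≠ (X ^ 2 + C u * X + C v) * (X ^ 2 + C s * X + C t)) :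
    Irreducible (f.map (Int.castRingHom ℚ)) := by
  rw [← algebraMap_int_eq]
  refine hf.irreducible_iff_irreducible_map_fraction_map.mp ?_
  refine hf.irreducible_iff_natDegree'.mpr ⟨fun h => by simp [h] at hdeg, ?_⟩
  intro g h hg hh hgh hh_deg
  rw [hdeg, Finset.mem_Ioc] at hh_deg
  obtain hh1 | hh2 : h.natDegree = 1 ∨ h.natDegree = 2 := by omega
  · refine hroot (-h.coeff 0) ?_
    rw [← hgh, hh.eq_X_add_C hh1]
    simp
  · have hg2 : g.natDegree = 2 := by
      have := hg.natDegree_mul hh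
      rw [hgh, hdeg] at this
      omega
    refine hquad (g.coeff 1) (g.coeff 0) (h.coeff 1) (h.coeff 0) ?_
    rw [← hgh, ← hg.eq_X_sq_add_C_mul_X_add_C hg2, ← hh.eq_X_sq_add_C_mul_X_add_C hh2]

theorem padicValInt_neg (p : ℕ) (x : ℤ) : padicValInt p (-x) = padicValInt p x := by
  simp [padicValInt]

theorem pow_dvd_mul_of_le_padicValInt_add {p : ℕ} {x y : ℤ} {k : ℕ}
    (h : k ≤ padicValInt p x + padicValInt p y) : (p : ℤ) ^ k ∣ x * y :=
  (pow_dvd_pow _ h).trans (pow_add (p : ℤ) _ _ ▸ mul_dvd_mul (padicValInt_dvd x) (padicValInt_dvd y))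

section padicValInt

variable {p : ℕ} [Fact p.Prime]

theorem padicValInt_pow (x : ℤ) (k : ℕ) :
    padicValInt p (x ^ k) = k * padicValInt p x := by
  simp [padicValInt, Int.natAbs_pow, padicValNat.pow]

theorem pow_dvd_of_le_padicValInt {x : ℤ} {k : ℕ} (h : k ≤ padicValInt p x) : (p : ℤ) ^ k ∣ x :=
  (padicValInt_dvd_iff k x).mpr (Or.inr h)

theorem not_pow_padicValInt_succ_dvd {x : ℤ} (hx : x ≠ 0) :
    ¬ (p : ℤ) ^ (padicValInt p x + 1) ∣ x := by
  rw [padicValInt_dvd_iff]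
  omega

theorem add_ne_zero_of_pow_padicValInt_succ_dvd {x y : ℤ} (hx : x ≠ 0)
    (hy : (p : ℤ) ^ (padicValInt p x + 1) ∣ y) : x + y ≠ 0 := by
  intro hxy
  exact not_pow_padicValInt_succ_dvd hx
    ((dvd_neg.mpr hy).trans (dvd_of_eq (neg_eq_of_add_eq_zero_left hxy)))

theorem padicValInt_add_of_pow_padicValInt_succ_dvd {x y : ℤ} (hx : x ≠ 0)
    (hy : (p : ℤ) ^ (padicValInt p x + 1) ∣ y) : padicValInt p (x + y) = padicValInt p x := by
  have hxy := add_ne_zero_of_pow_padicValInt_succ_dvd hx hy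
  have hlow : (p : ℤ) ^ padicValInt p x ∣ x + y :=
    dvd_add (padicValInt_dvd x) ((pow_dvd_pow _ (Nat.le_succ _)).trans hy)
  have hhigh : ¬ (p : ℤ) ^ (padicValInt p x + 1) ∣ x + y := fun h =>
    not_pow_padicValInt_succ_dvd hx (by simpa using dvd_sub h hy)
  rw [padicValInt_dvd_iff] at hlow hhigh
  omega

theorem padicValInt_add_of_ne {x y : ℤ} (hx : x ≠ 0) (hy : y ≠ 0)
    (hxy : padicValInt p x ≠ padicValInt p y) :
    x + y ≠ 0 ∧ padicValInt p (x + y) = min (padicValInt p x) (padicValInt p y) := by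
  wlog hlt : padicValInt p x < padicValInt p y generalizing x y
  · rw [add_comm, min_comm]
    exact this hy hx hxy.symm (by omega)
  have hdvd := pow_dvd_of_le_padicValInt (p := p) hlt
  exact ⟨add_ne_zero_of_pow_padicValInt_succ_dvd hx hdvd,
    by rw [padicValInt_add_of_pow_padicValInt_succ_dvd hx hdvd]; omega⟩

end padicValInt

section quartic

variable {p : ℕ} [Fact p.Prime] {a b c : ℤ}

/-- The four terms have valuations `4m`, `v_p(a) + 3m`, `v_p(b) + m`, `n`, where `m = v_p(r)` and
`n = v_p(c)`; since `4m ≠ n`, either `r⁴` or `c` has strictly the smallest valuation. -/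
theorem eval_quartic_ne_zero_of_padicValInt (hc0 : c ≠ 0)
    (ha : a = 0 ∨ padicValInt p c < 4 * padicValInt p a)
    (hb : b = 0 ∨ 3 * padicValInt p c < 4 * padicValInt p b)
    (h4 : ¬ 4 ∣ padicValInt p c) (r : ℤ) :
    (X ^ 4 + C a * X ^ 3 + C b * X + C c : ℤ[X]).eval r ≠ 0 := by
  simp only [eval_add, eval_mul, eval_pow, eval_C, eval_X]
  intro h
  have hr : r ≠ 0 := by
    rintro rfl
    exact hc0 (by simpa using h)
  have hr4 := padicValInt_pow (p := p) r 4
  have hr3 := padicValInt_pow (p := p) r 3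
  have har (k : ℕ) (hk : k ≤ padicValInt p c / 4 + 1 + 3 * padicValInt p r) :
      (p : ℤ) ^ k ∣ a * r ^ 3 := by
    rcases ha with rfl | ha
    · simp
    · exact pow_dvd_mul_of_le_padicValInt_add (by omega)
  have hbr (k : ℕ) (hk : k ≤ 3 * padicValInt p c / 4 + 1 + padicValInt p r) :
      (p : ℤ) ^ k ∣ b * r := by
    rcases hb with rfl | hb
    · simp
    · exact pow_dvd_mul_of_le_padicValInt_add (by omega)
  rcases lt_or_gt_of_ne (show 4 * padicValInt p r ≠ padicValInt p c by omega) with hlt | hgt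
  · refine add_ne_zero_of_pow_padicValInt_succ_dvd (p := p) (pow_ne_zero 4 hr) ?_
      (by linear_combination h : r ^ 4 + (a * r ^ 3 + b * r + c) = 0)
    exact dvd_add (dvd_add (har _ (by omega)) (hbr _ (by omega)))
      (pow_dvd_of_le_padicValInt (by omega))
  · refine add_ne_zero_of_pow_padicValInt_succ_dvd (p := p) hc0 ?_
      (by linear_combination h : c + (r ^ 4 + a * r ^ 3 + b * r) = 0)
    exact dvd_add (dvd_add (pow_dvd_of_le_padicValInt (by omega)) (har _ (by omega)))
      (hbr _ (by omega))

/-- Write `ν = v_p`. Since `ν(v) + ν(t) = n` is odd, `ν(v + t) = γ := min (ν(v), ν(t)) < n/2`, so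
`ν(u) + ν(s) = γ`. The bound on `ν(a) = ν(u + s)` forces `ν(u) = ν(s) = γ/2`, and then
`ν(b) = ν(ut + sv) = 3γ/2`, contradicting the bound on `ν(b)`. -/
theorem quartic_ne_mul_quadratics_of_padicValInt (hc0 : c ≠ 0)
    (ha : a = 0 ∨ padicValInt p c < 4 * padicValInt p a)
    (hb : b = 0 ∨ 3 * padicValInt p c < 4 * padicValInt p b)
    (h2 : ¬ 2 ∣ padicValInt p c) (u v s t : ℤ) :
    X ^ 4 + C a * X ^ 3 + C b * X + C c ≠ (X ^ 2 + C u * X + C v) * (X ^ 2 + C s * X + C t) := by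
  intro h
  obtain ⟨hsum, hmid, hlin, hprod⟩ := coeff_eq_of_X_pow_four_eq_mul_quadratics h
  have hv : v ≠ 0 := left_ne_zero_of_mul (hprod ▸ hc0)
  have ht : t ≠ 0 := right_ne_zero_of_mul (hprod ▸ hc0)
  have hn : padicValInt p v + padicValInt p t = padicValInt p c := by
    rw [← hprod, padicValInt.mul hv ht]
  obtain ⟨hvt, hvt_val⟩ := padicValInt_add_of_ne hv ht (p := p) (by omega)
  have hus : u * s = -(v + t) := by linear_combination hmid
  have hu : u ≠ 0 := left_ne_zero_of_mul (hus ▸ neg_ne_zero.mpr hvt)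
  have hs : s ≠ 0 := right_ne_zero_of_mul (hus ▸ neg_ne_zero.mpr hvt)
  have hus_val : padicValInt p u + padicValInt p s = min (padicValInt p v) (padicValInt p t) := by
    rw [← padicValInt.mul hu hs, hus, padicValInt_neg, hvt_val]
  have hus_eq : padicValInt p u = padicValInt p s := by
    by_contra hne
    obtain ⟨ha0, ha_val⟩ := padicValInt_add_of_ne hu hs hne
    rw [hsum] at ha0 ha_val
    have := ha.resolve_left ha0
    omega
  obtain ⟨hb0, hb_val⟩ := padicValInt_add_of_ne (p := p) (mul_ne_zero hu ht) (mul_ne_zero hs hv)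
    (by rw [padicValInt.mul hu ht, padicValInt.mul hs hv]; omega)
  rw [hlin, padicValInt.mul hu ht, padicValInt.mul hs hv] at hb_val
  have := hb.resolve_left (hlin ▸ hb0)
  omega

end quartic

theorem stmt6_general (a b c : ℤ) (p : ℕ) (hp : p.Prime) (hc0 : c ≠ 0)
    (ha : a = 0 ∨ padicValInt p c < 4 * padicValInt p a)
    (hb : b = 0 ∨ 3 * padicValInt p c < 4 * padicValInt p b)
    (hgcd : Nat.gcd (padicValInt p c) 4 = 1) :
    Irreducible ((X ^ 4 + C a * X ^ 3 + C b * X + C c : ℤ[X]).map (Int.castRingHom ℚ)) := by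
  have := Fact.mk hp
  have h2 : ¬ 2 ∣ padicValInt p c := fun h => by
    simpa [hgcd] using Nat.dvd_gcd h (by norm_num : 2 ∣ 4)
  have h4 : ¬ 4 ∣ padicValInt p c := fun h => h2 ((by norm_num : 2 ∣ 4).trans h)
  exact irreducible_map_of_monic_of_natDegree_eq_four (by monicity!) (by compute_degree!)
    (eval_quartic_ne_zero_of_padicValInt hc0 ha hb h4)
    (quartic_ne_mul_quadratics_of_padicValInt hc0 ha hb h2)

theorem stmt6 (a b c : ℤ) (p : ℕ) (hp : p.Prime) (hc0 : c ≠ 0)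
    (ha : a = 0 ∨ padicValInt p c < 4 * padicValInt p a)
    (hb : b = 0 ∨ 3 * padicValInt p c < 4 * padicValInt p b)
    (hc : 2 < padicValInt p c)
    (hgcd : Nat.gcd (padicValInt p c) 4 = 1) :
    Irreducible ((X ^ 4 + C a * X ^ 3 + C b * X + C c : ℤ[X]).map (Int.castRingHom ℚ)) :=
  stmt6_general a b c p hp hc0 ha hb hgcd
end
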